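/- Let y_1, ..., y_n be real numbers and w: {1,...,n} → [0,1] nonnegative weights. Define P(l,u) = Σ_{i=1}^n w_i · 1[l ≤ y_i ≤ u]. If [l,u] is an optimal solution to: minimize u−l subject to P(l,u) ≥ 1−α (assuming a feasible solution exists and 1−α > 0), then both l and u belong to the set {y_1, ..., y_n}. -/
import Mathlib


/-- Theorem 1 of HDI-Forest: the optimal prediction interval `[l,u]`, minimizing
`u - l` subject to the estimated coverage `∑ i, w i * 1[l ≤ y i ≤ u] ≥ 1 - α`,
has both endpoints among the data values `y i`. -/
theorem stmt_0 {n : ℕ} (y : Fin n → ℝ) (w : Fin n → ℝ)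
    (hw : ∀ i, w i ∈ Set.Icc (0 : ℝ) 1) (α : ℝ) (hα : 0 < 1 - α)
    (l u : ℝ)
    (hfeas : (∑ i, if l ≤ y i ∧ y i ≤ u then w i else 0) ≥ 1 - α)
    (hopt : ∀ l' u' : ℝ,
      (∑ i, if l' ≤ y i ∧ y i ≤ u' then w i else 0) ≥ 1 - α → u - l ≤ u' - l') :
    (∃ i, y i = l) ∧ (∃ i, y i = u) := by
  set s : Finset (Fin n) := Finset.univ.filter (fun i => l ≤ y i ∧ y i ≤ u) with hs
  have hsne : s.Nonempty := by
    by_contra h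
    rw [Finset.not_nonempty_iff_eq_empty] at h
    have : (∑ i, if l ≤ y i ∧ y i ≤ u then w i else 0) = 0 := by
      rw [← Finset.sum_filter, ← hs, h, Finset.sum_empty]
    linarith
  obtain ⟨i₀, hi₀, hmin⟩ := s.exists_min_image y hsne
  obtain ⟨i₁, hi₁, hmax⟩ := s.exists_max_image y hsne
  simp only [hs, Finset.mem_filter] at hi₀ hi₁
  have hcov : (∑ i, if y i₀ ≤ y i ∧ y i ≤ y i₁ then w i else 0) ≥ 1 - α := by
    refine le_trans hfeas (Finset.sum_le_sum fun i _ => ?_)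
    by_cases hc : l ≤ y i ∧ y i ≤ u
    · have hm : i ∈ s := by simp [hs, hc]
      simp [hc, hmin i hm, hmax i hm]
    · simp only [hc, if_false]
      split <;> [exact (hw i).1; exact le_refl 0]
  have h1 := hopt (y i₀) (y i₁) hcov
  have h2 : l ≤ y i₀ := hi₀.2.1
  have h3 : y i₁ ≤ u := hi₁.2.2
  exact ⟨⟨i₀, by linarith⟩, ⟨i₁, by linarith⟩⟩
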